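/- Simulating each single instruction of a register machine with 8 registers by an 8-counter machine requires 2^8 transition rules (one for each combination of empty/non-empty status of the eight counters); consequently a universal register machine with 21 instructions is simulated by a counter machine using 21·2^8 transitions, plus 2^8 transitions for comparing the output counter with the input word, plus 2^8 transitions for emptying all counters, plus 3 initialization transitions, for a total of m = 23·2^8 + 3 = 5891 transition rules. -/

import Mathlib

/-- What a counter machine transition reads on the input tape: a symbol of the
input alphabet, the blank symbol `B` (past the end of the input), or `λ`. -/
inductive CMInput (T : Type) where
  | sym (a : T) : CMInput T
  | blank : CMInput T
  | eps : CMInput T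

/-- An `n`-counter machine: a finite-state device with a one-way read-only
input tape and `n` counters.  A rule `(q, x, zs, q', eff)` applies in state `q`
when the input condition `x` holds and counter `i` is zero iff `zs i = true`;
it moves to state `q'` and adds `eff i ∈ {-1, 0, +1}` to counter `i`. -/
structure CounterMachine (T : Type) (n : ℕ) where
  State : Type
  stateFinite : Finite State
  q0 : State
  qF : State
  rules : Set (State × CMInput T × (Fin n → Bool) × State × (Fin n → ℤ))
  rulesFinite : rules.Finite
  effSmall : ∀ r ∈ rules, ∀ i, r.2.2.2.2 i = -1 ∨ r.2.2.2.2 i = 0 ∨ r.2.2.2.2 i = 1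

namespace CounterMachine

variable {T : Type} {n : ℕ}

/-- A configuration: current state, remaining input, counter contents. -/
def Cfg (M : CounterMachine T n) : Type := M.State × List T × (Fin n → ℕ)

/-- One transition step of a counter machine. -/
def Step (M : CounterMachine T n) (c c' : M.Cfg) : Prop :=
  ∃ inp zs eff, (c.1, inp, zs, c'.1, eff) ∈ M.rules ∧
    (∀ i, zs i = true ↔ c.2.2 i = 0) ∧
    (∀ i, (c'.2.2 i : ℤ) = (c.2.2 i : ℤ) + eff i) ∧
    (match inp with
     | CMInput.sym a => c.2.1 = a :: c'.2.1
     | CMInput.blank => c.2.1 = [] ∧ c'.2.1 = []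
     | CMInput.eps => c'.2.1 = c.2.1)

/-- The machine, started in `q0` with counter contents `init`, reads the whole
input word `w` and reaches the accepting state `qF`. -/
def AcceptsFrom (M : CounterMachine T n) (init : Fin n → ℕ) (w : List T) : Prop :=
  ∃ cnt : Fin n → ℕ, Relation.ReflTransGen M.Step (M.q0, w, init) (M.qF, [], cnt)

/-- The language accepted by a counter machine (started with empty counters). -/
def language (M : CounterMachine T n) : Language T :=
  { w | M.AcceptsFrom (fun _ => 0) w }

end CounterMachine

/-- Register machine instructions over `m` registers with labels from `L`. -/
inductive RMInstr (m : ℕ) (L : Type) where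
  | add (r : Fin m) (next : L) : RMInstr m L
  | check (r : Fin m) (ifZero ifPos : L) : RMInstr m L
  | checksub (r : Fin m) (ifPos ifZero : L) : RMInstr m L
  | halt : RMInstr m L

/-- A register machine with `m` registers, a finite set of labels, a start
label `l0`, a halting label `lh` (labelling the HALT instruction), and
distinguished input and output registers. -/
structure RegisterMachine (m : ℕ) where
  Lbl : Type
  lblFinite : Finite Lbl
  l0 : Lbl
  lh : Lbl
  prog : Lbl → RMInstr m Lbl
  haltAt : prog lh = RMInstr.halt
  inputReg : Fin m
  outputReg : Fin m

namespace RegisterMachine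

variable {m : ℕ}

/-- One step of a register machine on a configuration (label, registers). -/
def Step (M : RegisterMachine m) (c c' : M.Lbl × (Fin m → ℕ)) : Prop :=
  match M.prog c.1 with
  | RMInstr.add r next =>
      c'.1 = next ∧ c'.2 = Function.update c.2 r (c.2 r + 1)
  | RMInstr.check r ifZero ifPos =>
      ((c.2 r = 0 ∧ c'.1 = ifZero) ∨ (c.2 r ≠ 0 ∧ c'.1 = ifPos)) ∧ c'.2 = c.2
  | RMInstr.checksub r ifPos ifZero =>
      (c.2 r ≠ 0 ∧ c'.1 = ifPos ∧ c'.2 = Function.update c.2 r (c.2 r - 1)) ∨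
      (c.2 r = 0 ∧ c'.1 = ifZero ∧ c'.2 = c.2)
  | RMInstr.halt => False

/-- `M` computes `y` on input `x`: started at `l0` with `x` in the input
register and all other registers zero, `M` reaches the halting label with `y`
in the output register. -/
def Computes (M : RegisterMachine m) (x y : ℕ) : Prop :=
  ∃ regs : Fin m → ℕ,
    Relation.ReflTransGen M.Step
      (M.l0, Function.update (fun _ => 0) M.inputReg x) (M.lh, regs) ∧
    regs M.outputReg = y

end RegisterMachine

/-! A run of `M.toCounterMachine` on the unary word `1^y` first guesses an input `x` into the input
counter and then simulates `M` one instruction per step. A counter machine rule fixes whether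
each counter is zero, so one instruction needs one rule per zero pattern, `2^n` in all; the same
holds for the phase that, once `M` halts, reads one input symbol per unit of the output register,
and for the phase that empties the counters before accepting. With three rules for the guess this
gives `(|L| + 2) * 2^n + 3` rules. Soundness follows from an invariant of all runs that starts in
the initial configuration. -/

namespace CounterMachine

variable {T : Type} {n : ℕ}

/-- The zero/non-zero status of the counters: the component of a rule that a configuration with
counters `v` has to match. -/
def zeroPattern (v : Fin n → ℕ) : Fin n → Bool := fun i => decide (v i = 0)

@[simp]
theorem zeroPattern_apply (v : Fin n → ℕ) (i : Fin n) : zeroPattern v i = decide (v i = 0) :=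
  rfl

theorem zeroPattern_single_eq_iff {i : Fin n} {a b : ℕ} :
    zeroPattern (Pi.single i a) = zeroPattern (Pi.single i b) ↔ (a = 0 ↔ b = 0) := by
  refine ⟨fun h => by simpa using congrFun h i, fun h => funext fun j => ?_⟩
  rcases eq_or_ne j i with rfl | hj <;> simp [*]

def Reads : CMInput T → List T → List T → Prop
  | .sym a, u, u' => u = a :: u'
  | .blank, u, u' => u = [] ∧ u' = []
  | .eps, u, u' => u' = u

/-- The right-hand side `(x, q', e)` of a rule, applied to the unread input `u` and the counters
`v`, can produce the configuration `c'`. -/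
def Performs {S : Type} (a : CMInput T × S × (Fin n → ℤ)) (u : List T) (v : Fin n → ℕ)
    (c' : S × List T × (Fin n → ℕ)) : Prop :=
  c'.1 = a.2.1 ∧ (∀ i, (c'.2.2 i : ℤ) = v i + a.2.2 i) ∧ Reads a.1 u c'.2.1

theorem step_iff (M : CounterMachine T n) (c c' : M.Cfg) :
    M.Step c c' ↔ ∃ a : CMInput T × M.State × (Fin n → ℤ),
      (c.1, a.1, zeroPattern c.2.2, a.2.1, a.2.2) ∈ M.rules ∧ Performs a c.2.1 c.2.2 c' := by
  constructor
  · rintro ⟨inp, zs, eff, hrule, hzs, heff, hinp⟩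
    obtain rfl : zs = zeroPattern c.2.2 := funext fun i => by simp [← hzs i]
    exact ⟨(inp, c'.1, eff), hrule, rfl, heff, by cases inp <;> exact hinp⟩
  · rintro ⟨⟨inp, s', eff⟩, hrule, hs', heff, hinp⟩
    obtain ⟨s, u, v⟩ := c
    obtain ⟨s'', u', v'⟩ := c'
    obtain rfl : s'' = s' := hs'
    exact ⟨inp, zeroPattern v, eff, hrule, by simp, heff, by cases inp <;> exact hinp⟩

theorem performs_eps_iff {S : Type} {s : S} {eff : Fin n → ℤ} {u : List T} {v : Fin n → ℕ}
    {c' : S × List T × (Fin n → ℕ)} :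
    Performs (.eps, s, eff) u v c' ↔
      c'.1 = s ∧ c'.2.1 = u ∧ ∀ i, (c'.2.2 i : ℤ) = v i + eff i := by
  simp only [Performs, Reads]
  tauto

theorem performs_sym_iff {S : Type} {a : T} {s : S} {eff : Fin n → ℤ} {u : List T}
    {v : Fin n → ℕ} {c' : S × List T × (Fin n → ℕ)} :
    Performs (.sym a, s, eff) u v c' ↔
      c'.1 = s ∧ u = a :: c'.2.1 ∧ ∀ i, (c'.2.2 i : ℤ) = v i + eff i := by
  simp only [Performs, Reads]
  tauto

section Shift

variable {ι : Type*} {v v' : ι → ℕ}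

theorem shift_zero_iff : (∀ i, (v' i : ℤ) = v i + (0 : ι → ℤ) i) ↔ v' = v := by
  simp [funext_iff]

theorem shift_single_iff [DecidableEq ι] (r : ι) :
    (∀ i, (v' i : ℤ) = v i + (Pi.single r 1 : ι → ℤ) i) ↔
      v' = Function.update v r (v r + 1) := by
  simp only [funext_iff, Function.update_apply, Pi.single_apply]
  refine forall_congr' fun i => ?_
  split_ifs with h
  · subst h; omega
  · omega

theorem shift_neg_single_iff [DecidableEq ι] {r : ι} (hr : v r ≠ 0) :
    (∀ i, (v' i : ℤ) = v i + (-Pi.single r 1 : ι → ℤ) i) ↔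
      v' = Function.update v r (v r - 1) := by
  simp only [funext_iff, Function.update_apply, Pi.neg_apply, Pi.single_apply]
  refine forall_congr' fun i => ?_
  split_ifs with h
  · subst h; omega
  · omega

theorem shift_dec_nonzero_iff :
    (∀ i, (v' i : ℤ) = v i + (if v i = 0 then 0 else -1)) ↔ v' = v - 1 := by
  simp only [funext_iff, Pi.sub_apply, Pi.one_apply]
  refine forall_congr' fun i => ?_
  split_ifs <;> omega

theorem update_single_self [DecidableEq ι] (i : ι) (a b : ℕ) :
    Function.update (Pi.single i a : ι → ℕ) i b = Pi.single i b :=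
  Function.update_idem _ _ _

end Shift

end CounterMachine

namespace RegisterMachine

open CounterMachine Relation

/-- `sim l` simulates the instruction at `l`, `cmp` reads one input symbol per unit of the output
register, `drain` empties all counters. -/
inductive SimPhase (L : Type) where
  | sim (l : L)
  | cmp
  | drain

inductive SimState (L : Type) where
  | guess
  | accept
  | phase (p : SimPhase L)

def SimPhase.equivOption (L : Type) : SimPhase L ≃ Option (Option L) where
  toFun
    | .sim l => some (some l)
    | .cmp => some none
    | .drain => none
  invFun
    | some (some l) => .sim l
    | some none => .cmp
    | none => .drain
  left_inv p := by cases p <;> rfl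
  right_inv o := by rcases o with _ | _ | _ <;> rfl

def SimState.equivOption (L : Type) : SimState L ≃ Option (Option (SimPhase L)) where
  toFun
    | .phase p => some (some p)
    | .guess => some none
    | .accept => none
  invFun
    | some (some p) => .phase p
    | some none => .guess
    | none => .accept
  left_inv s := by cases s <;> rfl
  right_inv o := by rcases o with _ | _ | _ <;> rfl

instance {L : Type} [Finite L] : Finite (SimPhase L) := .of_equiv _ (SimPhase.equivOption L).symm

instance {L : Type} [Finite L] : Finite (SimState L) := .of_equiv _ (SimState.equivOption L).symm

theorem SimPhase.card_eq (L : Type) [Finite L] : Nat.card (SimPhase L) = Nat.card L + 2 := by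
  rw [Nat.card_congr (SimPhase.equivOption L), Finite.card_option, Finite.card_option]

variable {n : ℕ} (M : RegisterMachine n)

open Classical in
/-- The single rule for phase `p` and zero pattern `zs`. At a halting label other than `lh` the
machine loops forever. -/
noncomputable def transition :
    SimPhase M.Lbl → (Fin n → Bool) → CMInput Unit × SimState M.Lbl × (Fin n → ℤ)
  | .sim l, zs =>
    match M.prog l with
    | .add r next => (.eps, .phase (.sim next), Pi.single r 1)
    | .check r ifZero ifPos => (.eps, .phase (.sim (if zs r then ifZero else ifPos)), 0)
    | .checksub r ifPos ifZero =>
      if zs r then (.eps, .phase (.sim ifZero), 0)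
      else (.eps, .phase (.sim ifPos), -Pi.single r 1)
    | .halt => (.eps, if l = M.lh then .phase .cmp else .phase (.sim l), 0)
  | .cmp, zs =>
    if zs M.outputReg then (.eps, .phase .drain, 0)
    else (.sym (), .phase .cmp, -Pi.single M.outputReg 1)
  | .drain, zs =>
    if ∀ i, zs i then (.eps, .accept, 0)
    else (.eps, .phase .drain, fun i => if zs i then 0 else -1)

/-- The input `x` is guessed by raising the input counter to `x + 1` and lowering it once on
entering the simulation, so that `x = 0` needs no rule of its own. -/
def guessRules :
    Set (SimState M.Lbl × CMInput Unit × (Fin n → Bool) × SimState M.Lbl × (Fin n → ℤ)) :=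
  {(.guess, .eps, zeroPattern 0, .guess, Pi.single M.inputReg 1),
   (.guess, .eps, zeroPattern (Pi.single M.inputReg 1), .guess, Pi.single M.inputReg 1),
   (.guess, .eps, zeroPattern (Pi.single M.inputReg 1), .phase (.sim M.l0),
     -Pi.single M.inputReg 1)}

theorem finite_guessRules : M.guessRules.Finite :=
  ((Set.finite_singleton _).insert _).insert _

noncomputable def phaseRule (p : SimPhase M.Lbl × (Fin n → Bool)) :
    SimState M.Lbl × CMInput Unit × (Fin n → Bool) × SimState M.Lbl × (Fin n → ℤ) :=
  (.phase p.1, (M.transition p.1 p.2).1, p.2, (M.transition p.1 p.2).2.1,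
    (M.transition p.1 p.2).2.2)

theorem phaseRule_injective : Function.Injective M.phaseRule := by
  rintro ⟨p, zs⟩ ⟨p', zs'⟩ h
  simp only [phaseRule, Prod.mk.injEq, SimState.phase.injEq] at h
  rw [h.1, h.2.2.1]

/- Reducible, so that `M.toCounterMachine.State` unfolds to `SimState M.Lbl` when the lemmas
below are instantiated. -/
@[reducible]
noncomputable def toCounterMachine : CounterMachine Unit n where
  State := SimState M.Lbl
  stateFinite := have := M.lblFinite; inferInstance
  q0 := .guess
  qF := .accept
  rules := M.guessRules ∪ Set.range M.phaseRule
  rulesFinite := have := M.lblFinite; M.finite_guessRules.union (Set.finite_range _)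
  effSmall := by
    rintro r (hr | ⟨⟨p, zs⟩, rfl⟩) i
    · rcases hr with rfl | rfl | rfl <;> simp [Pi.single_apply] <;> tauto
    · cases p <;> simp only [phaseRule, transition] <;> split_ifs <;> (try split) <;>
        (try split_ifs) <;> simp only [Pi.single_apply, Pi.neg_apply, Pi.zero_apply] <;>
        (try split_ifs) <;> simp

variable {M}

theorem ncard_rules : M.toCounterMachine.rules.ncard = (Nat.card M.Lbl + 2) * 2 ^ n + 3 := by
  have := M.lblFinite
  have hdisj : Disjoint M.guessRules (Set.range M.phaseRule) := by
    rw [Set.disjoint_right]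
    rintro _ ⟨p, rfl⟩ (h | h | h) <;> simp [phaseRule] at h
  have hguess : M.guessRules.ncard = 3 := by
    have hpat : zeroPattern (0 : Fin n → ℕ) ≠ zeroPattern (Pi.single M.inputReg 1) :=
      fun h => by simpa using congrFun h M.inputReg
    rw [guessRules, Set.ncard_insert_of_notMem (by simp [hpat]), Set.ncard_pair (by simp)]
  show (M.guessRules ∪ _).ncard = _
  rw [Set.ncard_union_eq hdisj M.finite_guessRules (Set.finite_range _), hguess,
    Set.ncard_range_of_injective M.phaseRule_injective, Nat.card_prod, SimPhase.card_eq,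
    Nat.card_fun, Nat.card_fin, Nat.card_eq_fintype_card (α := Bool), Fintype.card_bool]
  ring

theorem step_toCounterMachine_iff {s : SimState M.Lbl} {u : List Unit} {v : Fin n → ℕ}
    {c' : SimState M.Lbl × List Unit × (Fin n → ℕ)} :
    M.toCounterMachine.Step (s, u, v) c' ↔
      ∃ a : CMInput Unit × SimState M.Lbl × (Fin n → ℤ),
        (s, a.1, zeroPattern v, a.2.1, a.2.2) ∈ M.guessRules ∪ Set.range M.phaseRule ∧
        Performs a u v c' :=
  step_iff _ _ _

theorem step_phase_iff {p : SimPhase M.Lbl} {u : List Unit} {v : Fin n → ℕ}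
    {c' : SimState M.Lbl × List Unit × (Fin n → ℕ)} :
    M.toCounterMachine.Step (.phase p, u, v) c' ↔
      Performs (M.transition p (zeroPattern v)) u v c' := by
  refine step_toCounterMachine_iff.trans ⟨?_, ?_⟩
  · rintro ⟨⟨inp, s', eff⟩, hguess | ⟨⟨p', zs⟩, h⟩, hperf⟩
    · rcases hguess with h | h | h <;> simp at h
    · simp only [phaseRule, Prod.mk.injEq, SimState.phase.injEq] at h
      obtain ⟨rfl, rfl, rfl, rfl, rfl⟩ := h
      exact hperf
  · exact fun h => ⟨_, .inr ⟨(p, zeroPattern v), rfl⟩, h⟩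

theorem step_sim_iff {l : M.Lbl} (hl : M.prog l ≠ .halt) {u u' : List Unit}
    {v v' : Fin n → ℕ} {s' : SimState M.Lbl} :
    M.toCounterMachine.Step (.phase (.sim l), u, v) (s', u', v') ↔
      u' = u ∧ ∃ l', s' = .phase (.sim l') ∧ M.Step (l, v) (l', v') := by
  refine step_phase_iff.trans ?_
  rw [transition]
  rcases hp : M.prog l with ⟨r, next⟩ | ⟨r, ifZero, ifPos⟩ | ⟨r, ifPos, ifZero⟩ | _
  all_goals simp only [RegisterMachine.Step, hp]
  · rw [performs_eps_iff, shift_single_iff]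
    aesop
  · by_cases hr : v r = 0 <;>
      simp only [zeroPattern_apply, hr, decide_true, decide_false, Bool.false_eq_true, if_true,
        if_false, performs_eps_iff, shift_zero_iff] <;> aesop
  · by_cases hr : v r = 0
    · simp only [zeroPattern_apply, hr, decide_true, if_true, performs_eps_iff, shift_zero_iff]
      aesop
    · simp only [zeroPattern_apply, hr, decide_false, Bool.false_eq_true, if_false,
        performs_eps_iff, shift_neg_single_iff hr]
      aesop
  · exact absurd hp hl

open Classical in
theorem step_sim_iff_of_halt {l : M.Lbl} (hl : M.prog l = .halt) {u : List Unit}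
    {v : Fin n → ℕ} {c' : SimState M.Lbl × List Unit × (Fin n → ℕ)} :
    M.toCounterMachine.Step (.phase (.sim l), u, v) c' ↔
      c' = (if l = M.lh then .phase .cmp else .phase (.sim l), u, v) := by
  refine step_phase_iff.trans ?_
  rw [transition]
  simp only [hl, performs_eps_iff, shift_zero_iff, Prod.ext_iff]

theorem step_cmp_iff {u : List Unit} {v : Fin n → ℕ}
    {c' : SimState M.Lbl × List Unit × (Fin n → ℕ)} :
    M.toCounterMachine.Step (.phase .cmp, u, v) c' ↔
      (v M.outputReg = 0 ∧ c' = (.phase .drain, u, v)) ∨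
      (v M.outputReg ≠ 0 ∧ ∃ u', u = () :: u' ∧
        c' = (.phase .cmp, u', Function.update v M.outputReg (v M.outputReg - 1))) := by
  refine step_phase_iff.trans ?_
  rw [transition]
  by_cases hr : v M.outputReg = 0
  · simp only [zeroPattern_apply, hr, decide_true, if_true, performs_eps_iff, shift_zero_iff]
    aesop
  · simp only [zeroPattern_apply, hr, decide_false, Bool.false_eq_true, if_false,
      performs_sym_iff, shift_neg_single_iff hr]
    aesop

theorem step_drain_iff {u : List Unit} {v : Fin n → ℕ}
    {c' : SimState M.Lbl × List Unit × (Fin n → ℕ)} :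
    M.toCounterMachine.Step (.phase .drain, u, v) c' ↔
      c' = if v = 0 then (.accept, u, v) else (.phase .drain, u, v - 1) := by
  refine step_phase_iff.trans ?_
  rw [transition]
  by_cases hv : v = 0
  · subst hv
    simp [performs_eps_iff, Prod.ext_iff, funext_iff]
  · have hv' : ¬ ∀ i, v i = 0 := by simpa [funext_iff] using hv
    simp only [zeroPattern_apply, decide_eq_true_eq, hv', hv, if_false, performs_eps_iff,
      shift_dec_nonzero_iff, Prod.ext_iff]

theorem not_step_accept {u : List Unit} {v : Fin n → ℕ}
    {c' : SimState M.Lbl × List Unit × (Fin n → ℕ)} :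
    ¬ M.toCounterMachine.Step (.accept, u, v) c' := by
  rw [step_toCounterMachine_iff]
  rintro ⟨a, (h | h | h) | ⟨_, h⟩, -⟩ <;> simp [phaseRule] at h

theorem step_guess_iff {k : ℕ} {u : List Unit}
    {c' : SimState M.Lbl × List Unit × (Fin n → ℕ)} :
    M.toCounterMachine.Step (.guess, u, Pi.single M.inputReg k) c' ↔
      c' = (.guess, u, Pi.single M.inputReg (k + 1)) ∨
      (k ≠ 0 ∧ c' = (.phase (.sim M.l0), u, Pi.single M.inputReg (k - 1))) := by
  have hk0 : zeroPattern (Pi.single M.inputReg k) = zeroPattern 0 ↔ k = 0 := by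
    rw [← Pi.single_zero M.inputReg, zeroPattern_single_eq_iff]; simp
  have hk1 : zeroPattern (Pi.single M.inputReg k) = zeroPattern (Pi.single M.inputReg 1) ↔
      k ≠ 0 := by
    rw [zeroPattern_single_eq_iff]; simp
  have hin : (Pi.single M.inputReg k : Fin n → ℕ) M.inputReg = k := Pi.single_eq_same _ _
  have raise : Performs (.eps, .guess, Pi.single M.inputReg 1) u (Pi.single M.inputReg k) c' ↔
      c' = (.guess, u, Pi.single M.inputReg (k + 1)) := by
    rw [performs_eps_iff, shift_single_iff, hin, update_single_self, Prod.ext_iff, Prod.ext_iff]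
  have enter (hk : k ≠ 0) :
      Performs (.eps, .phase (.sim M.l0), -Pi.single M.inputReg 1) u (Pi.single M.inputReg k) c' ↔
        c' = (.phase (.sim M.l0), u, Pi.single M.inputReg (k - 1)) := by
    rw [performs_eps_iff, shift_neg_single_iff (hin.trans_ne hk), hin, update_single_self,
      Prod.ext_iff, Prod.ext_iff]
  refine step_toCounterMachine_iff.trans ⟨?_, ?_⟩
  · rintro ⟨⟨inp, s', eff⟩, (h | h | h) | ⟨_, h⟩, hperf⟩
    · simp only [Prod.mk.injEq] at h
      obtain ⟨-, rfl, -, rfl, rfl⟩ := h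
      exact .inl (raise.1 hperf)
    · simp only [Prod.mk.injEq] at h
      obtain ⟨-, rfl, -, rfl, rfl⟩ := h
      exact .inl (raise.1 hperf)
    · simp only [Set.mem_singleton_iff, Prod.mk.injEq] at h
      obtain ⟨-, rfl, hzs, rfl, rfl⟩ := h
      exact .inr ⟨hk1.1 hzs, (enter (hk1.1 hzs)).1 hperf⟩
    · simp [phaseRule] at h
  · rintro (hc | ⟨hk, hc⟩)
    · by_cases hk : k = 0
      · exact ⟨(.eps, .guess, Pi.single M.inputReg 1), .inl (.inl (by rw [hk0.2 hk])),
          raise.2 hc⟩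
      · exact ⟨(.eps, .guess, Pi.single M.inputReg 1), .inl (.inr (.inl (by rw [hk1.2 hk]))),
          raise.2 hc⟩
    · exact ⟨(.eps, .phase (.sim M.l0), -Pi.single M.inputReg 1),
        .inl (.inr (.inr (by rw [hk1.2 hk]; rfl))), (enter hk).2 hc⟩

theorem guess_reaches_sim (u : List Unit) (x : ℕ) :
    ReflTransGen M.toCounterMachine.Step (.guess, u, 0)
      (.phase (.sim M.l0), u, Pi.single M.inputReg x) := by
  have raise (k : ℕ) : ReflTransGen M.toCounterMachine.Step (.guess, u, 0)
      (.guess, u, Pi.single M.inputReg k) := by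
    induction k with
    | zero => rw [Pi.single_zero]; exact .refl
    | succ k ih => exact ih.tail (step_guess_iff.2 (.inl rfl))
  exact (raise (x + 1)).tail (step_guess_iff.2 (.inr ⟨x.succ_ne_zero, rfl⟩))

theorem prog_ne_halt_of_step {l : M.Lbl} {v : Fin n → ℕ} {d : M.Lbl × (Fin n → ℕ)}
    (h : M.Step (l, v) d) : M.prog l ≠ .halt := by
  intro hl
  simp [RegisterMachine.Step, hl] at h

theorem sim_reaches_of_reaches {d d' : M.Lbl × (Fin n → ℕ)} (h : ReflTransGen M.Step d d')
    (u : List Unit) :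
    ReflTransGen M.toCounterMachine.Step (.phase (.sim d.1), u, d.2)
      (.phase (.sim d'.1), u, d'.2) := by
  induction h with
  | refl => rfl
  | tail _ hstep ih =>
    exact ih.tail ((step_sim_iff (prog_ne_halt_of_step hstep)).2 ⟨rfl, _, rfl, hstep⟩)

theorem cmp_reaches_drain (y : ℕ) (v : Fin n → ℕ) (hv : v M.outputReg = y) :
    ∃ v', ReflTransGen M.toCounterMachine.Step (.phase .cmp, List.replicate y (), v)
      (.phase .drain, [], v') := by
  induction y generalizing v with
  | zero => exact ⟨v, .single (step_cmp_iff.2 (.inl ⟨hv, rfl⟩))⟩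
  | succ y ih =>
    obtain ⟨v', hv'⟩ := ih (Function.update v M.outputReg (v M.outputReg - 1)) (by simp [hv])
    exact ⟨v', .head (step_cmp_iff.2 (.inr ⟨by omega, _, rfl, rfl⟩)) hv'⟩

theorem drain_reaches_accept (u : List Unit) (v : Fin n → ℕ) :
    ReflTransGen M.toCounterMachine.Step (.phase .drain, u, v) (.accept, u, 0) := by
  suffices ∀ k, ∀ v : Fin n → ℕ, (∀ i, v i ≤ k) →
      ReflTransGen M.toCounterMachine.Step (.phase .drain, u, v) (.accept, u, 0) from
    this _ v fun i => Finset.le_sup (f := v) (Finset.mem_univ i)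
  intro k
  induction k with
  | zero =>
    intro v hv
    obtain rfl : v = 0 := funext fun i => Nat.le_zero.1 (hv i)
    exact .single (step_drain_iff.2 (by simp))
  | succ k ih =>
    intro v hv
    by_cases hv0 : v = 0
    · subst hv0
      exact .single (step_drain_iff.2 (by simp))
    · exact .head (step_drain_iff.2 (by simp [hv0]))
        (ih (v - 1) fun i => by simpa using Nat.sub_le_of_le_add (hv i))

theorem replicate_mem_language_of_computes {x y : ℕ} (h : M.Computes x y) :
    List.replicate y () ∈ M.toCounterMachine.language := by
  obtain ⟨regs, hrun, rfl⟩ := h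
  obtain ⟨v', hcmp⟩ := cmp_reaches_drain _ regs rfl
  have hhalt (u : List Unit) :
      M.toCounterMachine.Step (.phase (.sim M.lh), u, regs) (.phase .cmp, u, regs) :=
    (step_sim_iff_of_halt M.haltAt).2 (by simp)
  exact ⟨0, (((guess_reaches_sim _ x).trans (sim_reaches_of_reaches hrun _)).tail
    (hhalt _)).trans (hcmp.trans (drain_reaches_accept _ _))⟩

/-- An invariant of the runs of `M.toCounterMachine` on `w`; `k` is the number of input symbols
read so far. -/
def SimInvariant (w : List Unit) : SimState M.Lbl × List Unit × (Fin n → ℕ) → Prop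
  | (.guess, u, v) => u = w ∧ ∃ k, v = Pi.single M.inputReg k
  | (.phase (.sim l), u, v) =>
    u = w ∧ ∃ x, ReflTransGen M.Step (M.l0, Pi.single M.inputReg x) (l, v)
  | (.phase .cmp, u, v) => ∃ k, w.length = u.length + k ∧ ∃ x, M.Computes x (v M.outputReg + k)
  | (.phase .drain, u, _) | (.accept, u, _) =>
    ∃ k, w.length = u.length + k ∧ ∃ x, M.Computes x k

theorem SimInvariant.step {w : List Unit} {c c' : SimState M.Lbl × List Unit × (Fin n → ℕ)}
    (hc : M.SimInvariant w c) (h : M.toCounterMachine.Step c c') : M.SimInvariant w c' := by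
  obtain ⟨s, u, v⟩ := c
  rcases s with _ | _ | (l | _ | _)
  · obtain ⟨rfl, k, rfl⟩ := hc
    rcases step_guess_iff.1 h with rfl | ⟨-, rfl⟩
    · exact ⟨rfl, k + 1, rfl⟩
    · exact ⟨rfl, k - 1, .refl⟩
  · exact absurd h not_step_accept
  · obtain ⟨rfl, x, hrun⟩ := hc
    by_cases hl : M.prog l = .halt
    · rw [step_sim_iff_of_halt hl] at h
      split_ifs at h with hlh <;> subst h
      · exact ⟨0, rfl, x, v, hlh ▸ hrun, rfl⟩
      · exact ⟨rfl, x, hrun⟩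
    · obtain ⟨s', u', v'⟩ := c'
      obtain ⟨rfl, l', rfl, hstep⟩ := (step_sim_iff hl).1 h
      exact ⟨rfl, x, hrun.tail hstep⟩
  · obtain ⟨k, hk, x, hx⟩ := hc
    rcases step_cmp_iff.1 h with ⟨hr, rfl⟩ | ⟨hr, u', rfl, rfl⟩
    · exact ⟨k, hk, x, by rwa [hr, zero_add] at hx⟩
    · refine ⟨k + 1, by simp [hk]; omega, x, ?_⟩
      rwa [Function.update_self, show v M.outputReg - 1 + (k + 1) = v M.outputReg + k by omega]
  · obtain ⟨k, hk, hx⟩ := hc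
    rw [step_drain_iff] at h
    split_ifs at h <;> subst h <;> exact ⟨k, hk, hx⟩

theorem SimInvariant.of_reaches {w : List Unit} {c : SimState M.Lbl × List Unit × (Fin n → ℕ)}
    (h : ReflTransGen M.toCounterMachine.Step (.guess, w, 0) c) : M.SimInvariant w c := by
  induction h with
  | refl => exact ⟨rfl, 0, (Pi.single_zero _).symm⟩
  | tail _ hstep ih => exact ih.step hstep

theorem computes_of_replicate_mem_language {y : ℕ}
    (h : List.replicate y () ∈ M.toCounterMachine.language) : ∃ x, M.Computes x y := by
  obtain ⟨cnt, hrun⟩ := h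
  obtain ⟨k, hk, hx⟩ := SimInvariant.of_reaches hrun
  simp only [List.length_replicate, List.length_nil, zero_add] at hk
  exact hk ▸ hx

theorem replicate_mem_language_iff {y : ℕ} :
    List.replicate y () ∈ M.toCounterMachine.language ↔ ∃ x, M.Computes x y :=
  ⟨computes_of_replicate_mem_language, fun ⟨_, hx⟩ => replicate_mem_language_of_computes hx⟩

end RegisterMachine

/-- Simulating each of the 21 instructions of an 8-register universal register
machine by an 8-counter machine takes `2^8` transition rules (one per
combination of empty/non-empty statuses of the eight counters); together with
`2^8` transitions for comparing the output counter with the input word, `2^8`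
transitions for emptying the counters, and `3` initialization transitions, the
simulating counter machine has `m = 21·2^8 + 2^8 + 2^8 + 3 = 23·2^8 + 3 = 5891`
transition rules. -/
theorem universal_counter_machine_size :
    21 * 2 ^ 8 + 2 ^ 8 + 2 ^ 8 + 3 = 23 * 2 ^ 8 + 3 ∧
    23 * 2 ^ 8 + 3 = 5891 ∧
    ∀ M : RegisterMachine 8, Nat.card M.Lbl = 21 →
      ∃ C : CounterMachine Unit 8,
        C.rules.ncard = 23 * 2 ^ 8 + 3 ∧
        ∀ y : ℕ, (List.replicate y () ∈ C.language ↔ ∃ x, M.Computes x y) :=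
  ⟨by norm_num, by norm_num, fun M hM =>
    ⟨M.toCounterMachine, by rw [RegisterMachine.ncard_rules, hM],
      fun _ => RegisterMachine.replicate_mem_language_iff⟩⟩
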